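/- Let r ∈ ℝ and k ∈ {0, 1, 2, 3, 4, 5}. The function v(w) = w^k · ₁F₅(k/6 − r; b_{k,1},…,b_{k,5}; −w⁶/6⁶), where (b_{k,1},…,b_{k,5}) is the list ( (k+1)/6, (k+2)/6, …, (k+6)/6 ) with the single entry equal to 1 removed, satisfies the sixth-order linear ordinary differential equation v⁽⁶⁾(w) + (1/6) w v′(w) − r v(w) = 0 for every w ∈ ℝ. -/

import Mathlib

/-- Pochhammer symbol (rising factorial) `(a)_k = a(a+1)⋯(a+k-1)`. -/
noncomputable def poch (a : ℝ) (k : ℕ) : ℝ := ∏ i ∈ Finset.range k, (a + (i : ℝ))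

/-- Generalized hypergeometric function `₁F_q(a; b₁,…,b_q; z)` with lower
parameters given by a list. -/
noncomputable def hypF (a : ℝ) (bs : List ℝ) (z : ℝ) : ℝ :=
  ∑' n : ℕ, poch a n / ((bs.map fun b => poch b n).prod) * z ^ n / (Nat.factorial n)

/-- The list `((k+1)/6, (k+2)/6, …, (k+6)/6)` with the single entry equal to `1` removed. -/
noncomputable def bParams (k : ℕ) : List ℝ :=
  ((List.range 6).map fun j => ((k : ℝ) + (j : ℝ) + 1) / 6).erase 1

/-- The solution `v_{k+1}(w) = w^k ₁F₅(k/6 - r; b_{k,1},…,b_{k,5}; -w⁶/6⁶)` of the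
similarity equation of the sixth-order corner-layer equation. -/
noncomputable def vSol (r : ℝ) (k : ℕ) (w : ℝ) : ℝ :=
  w ^ k * hypF ((k : ℝ) / 6 - r) (bParams k) (-w ^ 6 / 6 ^ 6)

/-!
Expanding `₁F₅` turns `vSol r k` into an entire power series `∑ aₙ wⁿ` whose coefficients vanish
unless `n ≡ k (mod 6)`, and termwise differentiation reduces the equation to the recurrence
`(n+1)⋯(n+6) a_{n+6} + (n/6 - r) aₙ = 0`. For `n = 6m + k` this is the ratio of consecutive
`₁F₅` coefficients, since `(6m+k+1)⋯(6m+k+6) = 6⁶ (m+1) ∏_b (b+m)`: the parameter `1` missing from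
`bParams k` is supplied by the `m!` of the series.
-/

open Filter

namespace RealPowerSeries

noncomputable def powerSum (a : ℕ → ℝ) (x : ℝ) : ℝ := ∑' n, a n * x ^ n

def HasInfiniteRadius (a : ℕ → ℝ) : Prop := ∀ R : ℝ, 0 ≤ R → Summable fun n => |a n| * R ^ n

def derivCoeff (a : ℕ → ℝ) (n : ℕ) : ℝ := (n + 1) * a (n + 1)

variable {a : ℕ → ℝ}

lemma HasInfiniteRadius.summable (ha : HasInfiniteRadius a) (x : ℝ) :
    Summable fun n => a n * x ^ n :=
  .of_norm <| (ha |x| (abs_nonneg x)).congr fun n => by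
    rw [Real.norm_eq_abs, abs_mul, abs_pow]

lemma HasInfiniteRadius.hasSum (ha : HasInfiniteRadius a) (x : ℝ) :
    HasSum (fun n => a n * x ^ n) (powerSum a x) :=
  (ha.summable x).hasSum

lemma hasInfiniteRadius_derivCoeff (ha : HasInfiniteRadius a) :
    HasInfiniteRadius (derivCoeff a) := by
  intro R hR
  have htail := (summable_nat_add_iff 1).2 (ha (2 * (R + 1)) (by positivity))
  refine htail.of_nonneg_of_le (fun n => by positivity) fun n => ?_
  have hn : (n + 1 : ℝ) ≤ 2 ^ (n + 1) := by exact_mod_cast (Nat.lt_two_pow_self).le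
  have hR : R ^ n ≤ (R + 1) ^ (n + 1) :=
    (pow_le_pow_left₀ hR (by linarith) n).trans (pow_le_pow_right₀ (by linarith) n.le_succ)
  calc |derivCoeff a n| * R ^ n = |a (n + 1)| * ((n + 1) * R ^ n) := by
        rw [derivCoeff, abs_mul, abs_of_nonneg (by positivity)]; ring
    _ ≤ |a (n + 1)| * (2 ^ (n + 1) * (R + 1) ^ (n + 1)) := by gcongr
    _ = |a (n + 1)| * (2 * (R + 1)) ^ (n + 1) := by rw [mul_pow]

lemma hasInfiniteRadius_iterate_derivCoeff (ha : HasInfiniteRadius a) (j : ℕ) :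
    HasInfiniteRadius (derivCoeff^[j] a) := by
  induction j with
  | zero => exact ha
  | succ j ih => rw [Function.iterate_succ_apply']; exact hasInfiniteRadius_derivCoeff ih

lemma hasDerivAt_powerSum (ha : HasInfiniteRadius a) (x : ℝ) :
    HasDerivAt (powerSum a) (powerSum (derivCoeff a) x) x := by
  have hsplit : powerSum a = fun y => a 0 + ∑' n, a (n + 1) * y ^ (n + 1) := by
    ext y; rw [powerSum, (ha.summable y).tsum_eq_zero_add]; simp
  set R := |x| + 1
  have hx : x ∈ Metric.ball (0 : ℝ) R := by simp [R]
  have hbound : ∀ n, ∀ y ∈ Metric.ball (0 : ℝ) R,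
      ‖derivCoeff a n * y ^ n‖ ≤ |derivCoeff a n| * R ^ n := by
    intro n y hy
    rw [Real.norm_eq_abs, abs_mul, abs_pow]
    gcongr
    simpa using (mem_ball_zero_iff.1 hy).le
  have hterm : ∀ n y, HasDerivAt (fun z => a (n + 1) * z ^ (n + 1)) (derivCoeff a n * y ^ n) y :=
    fun n y => by
      simpa [derivCoeff, mul_comm, mul_left_comm] using
        (hasDerivAt_pow (n + 1) y).const_mul (a (n + 1))
  rw [hsplit]
  exact (hasDerivAt_tsum_of_isPreconnected (hasInfiniteRadius_derivCoeff ha R (by positivity))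
    Metric.isOpen_ball (convex_ball 0 R).isPreconnected (fun n y _ => hterm n y) hbound hx
    ((summable_nat_add_iff 1).2 (ha.summable x)) hx).const_add _

lemma iteratedDeriv_powerSum (ha : HasInfiniteRadius a) (j : ℕ) :
    iteratedDeriv j (powerSum a) = powerSum (derivCoeff^[j] a) := by
  induction j generalizing a with
  | zero => rfl
  | succ j ih =>
    rw [iteratedDeriv_succ', funext fun x => (hasDerivAt_powerSum ha x).deriv,
      ih (hasInfiniteRadius_derivCoeff ha), Function.iterate_succ_apply]

lemma iterate_derivCoeff_apply (j n : ℕ) :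
    derivCoeff^[j] a n = (n + 1).ascFactorial j * a (n + j) := by
  induction j generalizing a with
  | zero => simp
  | succ j ih =>
    rw [Function.iterate_succ_apply, ih, derivCoeff, Nat.ascFactorial_succ]
    push_cast
    ring_nf

noncomputable def spreadCoeff (p k : ℕ) (c : ℝ) (b : ℕ → ℝ) (n : ℕ) : ℝ :=
  if n % p = k then b (n / p) * c ^ (n / p) else 0

variable {p k : ℕ} {c : ℝ} {b : ℕ → ℝ}

lemma spreadCoeff_mul_add (hk : k < p) (m : ℕ) :
    spreadCoeff p k c b (p * m + k) = b m * c ^ m := by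
  have hmod : (p * m + k) % p = k := by rw [Nat.mul_add_mod, Nat.mod_eq_of_lt hk]
  have hdiv : (p * m + k) / p = m := by
    rw [Nat.mul_add_div (by omega), Nat.div_eq_of_lt hk, add_zero]
  simp [spreadCoeff, hmod, hdiv]

lemma injective_mul_add (hp : 0 < p) : Function.Injective fun m => p * m + k := fun _ _ h => by
  simpa [hp.ne'] using h

lemma spreadCoeff_eq_zero_of_notMem_range {n : ℕ} (hn : n ∉ Set.range fun m => p * m + k) :
    spreadCoeff p k c b n = 0 :=
  if_neg fun h => hn ⟨n / p, by rw [← h]; exact Nat.div_add_mod n p⟩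

lemma powerSum_spreadCoeff (hk : k < p) (x : ℝ) :
    powerSum (spreadCoeff p k c b) x = x ^ k * powerSum b (c * x ^ p) := by
  have hsupp : Function.support (fun n => spreadCoeff p k c b n * x ^ n)
      ⊆ Set.range fun m => p * m + k := fun n hn => by
    by_contra h
    exact hn (by simp [spreadCoeff_eq_zero_of_notMem_range h])
  rw [powerSum, ← (injective_mul_add (p := p) (k := k) (by omega)).tsum_eq hsupp, powerSum,
    ← tsum_mul_left]
  exact tsum_congr fun m => by rw [spreadCoeff_mul_add hk, pow_add, pow_mul]; ring

lemma hasInfiniteRadius_spreadCoeff (hk : k < p) (hb : HasInfiniteRadius b) :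
    HasInfiniteRadius (spreadCoeff p k c b) := by
  intro R hR
  refine ((injective_mul_add (p := p) (k := k) (by omega)).summable_iff fun n hn => by
    simp [spreadCoeff_eq_zero_of_notMem_range hn]).1 ?_
  refine ((hb (|c| * R ^ p) (by positivity)).mul_left (R ^ k)).congr fun m => ?_
  simp only [Function.comp_apply, spreadCoeff_mul_add hk, abs_mul, abs_pow, pow_add, pow_mul,
    mul_pow]
  ring

lemma iteratedDeriv_add_mul_deriv_sub_eq_powerSum (ha : HasInfiniteRadius a) (j : ℕ)
    (c r x : ℝ) :
    iteratedDeriv j (powerSum a) x + c * x * deriv (powerSum a) x - r * powerSum a x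
      = powerSum (fun n => derivCoeff^[j] a n + (c * n - r) * a n) x := by
  have hiter : HasSum (fun n => derivCoeff^[j] a n * x ^ n) (iteratedDeriv j (powerSum a) x) := by
    rw [iteratedDeriv_powerSum ha]
    exact (hasInfiniteRadius_iterate_derivCoeff ha j).hasSum x
  have hEuler : HasSum (fun n => n * a n * x ^ n) (x * deriv (powerSum a) x) := by
    rw [(hasDerivAt_powerSum ha x).deriv]
    refine (hasSum_nat_add_iff' 1).1 ?_
    simpa [derivCoeff, pow_succ, mul_comm, mul_left_comm, mul_assoc] using
      ((hasInfiniteRadius_derivCoeff ha).hasSum x).mul_left x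
  have hsum := (hiter.add (hEuler.mul_left c)).sub ((ha.hasSum x).mul_left r)
  rw [← mul_assoc] at hsum
  rw [← hsum.tsum_eq]
  exact tsum_congr fun n => by ring

end RealPowerSeries

open RealPowerSeries

lemma poch_succ (a : ℝ) (n : ℕ) : poch a (n + 1) = poch a n * (a + n) :=
  Finset.prod_range_succ _ _

lemma poch_pos {a : ℝ} (ha : 0 < a) (n : ℕ) : 0 < poch a n :=
  Finset.prod_pos fun _ _ => by positivity

noncomputable def hypCoeff (a : ℝ) (bs : List ℝ) (n : ℕ) : ℝ :=
  poch a n / (bs.map fun b => poch b n).prod / n.factorial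

lemma hypF_eq_powerSum (a : ℝ) (bs : List ℝ) : hypF a bs = powerSum (hypCoeff a bs) := by
  ext z
  exact tsum_congr fun n => by rw [hypCoeff]; ring

variable {bs : List ℝ}

lemma hypCoeff_succ_mul (hbs : ∀ b ∈ bs, 0 < b) (a : ℝ) (n : ℕ) :
    hypCoeff a bs (n + 1) * ((n + 1) * (bs.map (· + (n : ℝ))).prod)
      = hypCoeff a bs n * (a + n) := by
  have hpoch : (bs.map fun b => poch b n).prod ≠ 0 :=
    (List.prod_pos (by simpa using fun b hb => poch_pos (hbs b hb) n)).ne'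
  have hshift : (bs.map (· + (n : ℝ))).prod ≠ 0 :=
    (List.prod_pos (by simpa using fun b hb => by linarith [hbs b hb])).ne'
  simp only [hypCoeff, poch_succ, List.prod_map_mul, Nat.factorial_succ]
  push_cast
  field_simp

lemma le_prod_map_add (hbs : ∀ b ∈ bs, 0 ≤ b) (hq : bs ≠ []) {x : ℝ} (hx : 1 ≤ x) :
    x ≤ (bs.map (· + x)).prod :=
  calc x ≤ x ^ bs.length := le_self_pow₀ hx (List.length_pos_iff.2 hq).ne'
    _ = (bs.map fun _ => x).prod := by simp [List.map_const', List.prod_replicate]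
    _ ≤ (bs.map (· + x)).prod :=
      List.prod_map_le_prod_map₀ _ _ (fun _ _ => by linarith) fun b hb => by linarith [hbs b hb]

lemma eventually_abs_add_mul_le (a R : ℝ) :
    ∀ᶠ n : ℕ in atTop, |a + n| * R ≤ (n + 1) * n / 2 := by
  filter_upwards [eventually_ge_atTop 1,
    tendsto_natCast_atTop_atTop.eventually_ge_atTop (2 * (|a| + 1) * |R|)] with n hn hlarge
  have hn' : (1 : ℝ) ≤ n := by exact_mod_cast hn
  have ha : |a + n| ≤ (|a| + 1) * n := by
    calc |a + n| ≤ |a| + n := by simpa using abs_add_le a (n : ℝ)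
      _ ≤ (|a| + 1) * n := by nlinarith [abs_nonneg a]
  calc |a + n| * R ≤ (|a| + 1) * n * |R| := by
        nlinarith [le_abs_self R, abs_nonneg R, abs_nonneg (a + n)]
    _ ≤ (n + 1) * n / 2 := by nlinarith [abs_nonneg R, abs_nonneg a]

lemma hasInfiniteRadius_hypCoeff (a : ℝ) (hbs : ∀ b ∈ bs, 0 < b) (hq : bs ≠ []) :
    HasInfiniteRadius (hypCoeff a bs) := by
  intro R hR
  refine summable_of_ratio_norm_eventually_le (r := 1 / 2) (by norm_num) ?_
  filter_upwards [eventually_ge_atTop 1, eventually_abs_add_mul_le a R] with n hn hratio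
  have hn' : (1 : ℝ) ≤ n := by exact_mod_cast hn
  have hP : (n : ℝ) ≤ (bs.map (· + (n : ℝ))).prod :=
    le_prod_map_add (fun b hb => (hbs b hb).le) hq hn'
  have habs : |hypCoeff a bs (n + 1)| * ((n + 1) * (bs.map (· + (n : ℝ))).prod)
      = |hypCoeff a bs n| * |a + n| := by
    rw [← abs_of_pos (a := (n + 1) * (bs.map (· + (n : ℝ))).prod)
      (mul_pos (by positivity) (by linarith)), ← abs_mul,
      hypCoeff_succ_mul hbs, abs_mul]
  have hstep : |hypCoeff a bs (n + 1)| * R ≤ 1 / 2 * |hypCoeff a bs n| := by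
    refine le_of_mul_le_mul_right ?_ (show (0 : ℝ) < (n + 1) * n by positivity)
    calc |hypCoeff a bs (n + 1)| * R * ((n + 1) * n)
        ≤ |hypCoeff a bs (n + 1)| * ((n + 1) * (bs.map (· + (n : ℝ))).prod) * R := by
          rw [mul_right_comm]; gcongr
      _ = |hypCoeff a bs n| * (|a + n| * R) := by rw [habs]; ring
      _ ≤ |hypCoeff a bs n| * ((n + 1) * n / 2) := by gcongr
      _ = 1 / 2 * |hypCoeff a bs n| * ((n + 1) * n) := by ring
  rw [Real.norm_of_nonneg (mul_nonneg (abs_nonneg _) (pow_nonneg hR _)),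
    Real.norm_of_nonneg (mul_nonneg (abs_nonneg _) (pow_nonneg hR _)), pow_succ]
  calc |hypCoeff a bs (n + 1)| * (R ^ n * R) = |hypCoeff a bs (n + 1)| * R * R ^ n := by ring
    _ ≤ 1 / 2 * |hypCoeff a bs n| * R ^ n := by gcongr
    _ = 1 / 2 * (|hypCoeff a bs n| * R ^ n) := by ring

lemma bParams_pos (k : ℕ) : ∀ b ∈ bParams k, 0 < b := fun b hb => by
  obtain ⟨j, -, rfl⟩ := by simpa using List.mem_of_mem_erase hb
  positivity

lemma bParams_ne_nil (k : ℕ) : bParams k ≠ [] := by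
  rw [← List.length_pos_iff, bParams, List.length_erase]
  split_ifs <;> simp

lemma ascFactorial_six_eq_prod_bParams {k : ℕ} (hk : k ≤ 5) (m : ℕ) :
    ((6 * m + k + 1).ascFactorial 6 : ℝ)
      = 6 ^ 6 * (m + 1) * ((bParams k).map (· + (m : ℝ))).prod := by
  have hmem : (1 : ℝ) ∈ (List.range 6).map fun j => ((k : ℝ) + (j : ℝ) + 1) / 6 := by
    simpa using ⟨5 - k, by omega, by rw [Nat.cast_sub hk]; ring⟩
  rw [mul_assoc, add_comm (m : ℝ) 1, bParams, List.prod_map_erase (· + (m : ℝ)) hmem]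
  simp [Nat.ascFactorial_succ, List.range_succ]
  ring

noncomputable def vCoeff (r : ℝ) (k : ℕ) : ℕ → ℝ :=
  spreadCoeff 6 k (-1 / 6 ^ 6) (hypCoeff ((k : ℝ) / 6 - r) (bParams k))

lemma vSol_eq_powerSum (r : ℝ) {k : ℕ} (hk : k ≤ 5) : vSol r k = powerSum (vCoeff r k) := by
  ext w
  rw [vSol, hypF_eq_powerSum, vCoeff, powerSum_spreadCoeff (by omega)]
  ring_nf

lemma hasInfiniteRadius_vCoeff (r : ℝ) {k : ℕ} (hk : k ≤ 5) : HasInfiniteRadius (vCoeff r k) :=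
  hasInfiniteRadius_spreadCoeff (by omega)
    (hasInfiniteRadius_hypCoeff _ (bParams_pos k) (bParams_ne_nil k))

lemma iterate_derivCoeff_vCoeff_add (r : ℝ) {k : ℕ} (hk : k ≤ 5) (n : ℕ) :
    derivCoeff^[6] (vCoeff r k) n + (1 / 6 * n - r) * vCoeff r k n = 0 := by
  rw [iterate_derivCoeff_apply]
  by_cases h : n % 6 = k
  · obtain ⟨m, rfl⟩ : ∃ m, n = 6 * m + k := ⟨n / 6, by omega⟩
    rw [show 6 * m + k + 6 = 6 * (m + 1) + k by ring, vCoeff, spreadCoeff_mul_add (by omega),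
      spreadCoeff_mul_add (by omega), ascFactorial_six_eq_prod_bParams hk]
    have hrec := hypCoeff_succ_mul (bParams_pos k) ((k : ℝ) / 6 - r) m
    push_cast
    linear_combination -(-1 / 6 ^ 6 : ℝ) ^ m * hrec
  · simp [vCoeff, spreadCoeff, h]

/-- For `k = 0,…,5`, the function `v_{k+1}` satisfies the sixth-order ODE
`v⁽⁶⁾(w) + (1/6) w v'(w) - r v(w) = 0` for every `w ∈ ℝ`. -/
theorem vSol_satisfies_similarity_ODE (r : ℝ) (k : ℕ) (hk : k ≤ 5) (w : ℝ) :
    iteratedDeriv 6 (vSol r k) w + 1/6 * w * deriv (vSol r k) w - r * vSol r k w = 0 := by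
  rw [vSol_eq_powerSum r hk,
    iteratedDeriv_add_mul_deriv_sub_eq_powerSum (hasInfiniteRadius_vCoeff r hk)]
  simp only [powerSum, iterate_derivCoeff_vCoeff_add r hk, zero_mul, tsum_zero]
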